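/- Let p₁ and p₂ be distinct prime numbers, let r₁, r₂ be positive integers, and set q₁ = p₁^{r₁}, q₂ = p₂^{r₂}. Then the set K = { 2 + 2π√(-1) · ( b₁/log q₁ + b₂/log q₂ ) : b₁, b₂ ∈ ℤ } ⊆ ℂ is dense in the vertical line { s ∈ ℂ : Re s = 2 }. -/

import Mathlib

open Complex

-- auxiliary: if q₁ = p₁^r₁, q₂ = p₂^r₂ with p₁ ≠ p₂ primes, then the additive
-- subgroup of ℝ generated by 1/log q₁ and 1/log q₂ is dense.
lemma aux_dense_subgroup (p₁ p₂ : ℕ) (hp₁ : p₁.Prime) (hp₂ : p₂.Prime)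
    (hne : p₁ ≠ p₂) (r₁ r₂ : ℕ) (hr₁ : 0 < r₁) (hr₂ : 0 < r₂)
    (q₁ q₂ : ℕ) (hq₁ : q₁ = p₁ ^ r₁) (hq₂ : q₂ = p₂ ^ r₂) :
    Dense ((AddSubgroup.closure {1 / Real.log q₁, 1 / Real.log q₂} : AddSubgroup ℝ) : Set ℝ) := by
  have hq₁1 : (1 : ℝ) < (q₁ : ℝ) := by
    have : 2 ≤ q₁ := by
      calc 2 ≤ p₁ := hp₁.two_le
      _ ≤ p₁ ^ r₁ := Nat.le_self_pow hr₁.ne' _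
      _ = q₁ := hq₁.symm
    exact_mod_cast this
  have hq₂1 : (1 : ℝ) < (q₂ : ℝ) := by
    have : 2 ≤ q₂ := by
      calc 2 ≤ p₂ := hp₂.two_le
      _ ≤ p₂ ^ r₂ := Nat.le_self_pow hr₂.ne' _
      _ = q₂ := hq₂.symm
    exact_mod_cast this
  have hL₁ : 0 < Real.log q₁ := Real.log_pos hq₁1
  have hL₂ : 0 < Real.log q₂ := Real.log_pos hq₂1
  rcases AddSubgroup.dense_or_cyclic
      (AddSubgroup.closure {1 / Real.log q₁, 1 / Real.log q₂}) with h | ⟨c, hc⟩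
  · exact h
  · exfalso
    have h1 : (1 / Real.log q₁) ∈
        AddSubgroup.closure ({1 / Real.log q₁, 1 / Real.log q₂} : Set ℝ) :=
      AddSubgroup.subset_closure (by simp)
    have h2 : (1 / Real.log q₂) ∈
        AddSubgroup.closure ({1 / Real.log q₁, 1 / Real.log q₂} : Set ℝ) :=
      AddSubgroup.subset_closure (by simp)
    rw [hc, AddSubgroup.mem_closure_singleton] at h1 h2
    obtain ⟨m, hm⟩ := h1
    obtain ⟨n, hn⟩ := h2
    -- m • c = 1/L₁, n • c = 1/L₂ ⇒ n * L₂ = m * L₁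
    have key : (n : ℝ) * Real.log q₂ = (m : ℝ) * Real.log q₁ := by
      have hmne : (m : ℝ) ≠ 0 := by
        intro h0
        rw [zsmul_eq_mul, h0, zero_mul] at hm
        exact (one_div_ne_zero hL₁.ne') hm.symm
      have hnne : (n : ℝ) ≠ 0 := by
        intro h0
        rw [zsmul_eq_mul, h0, zero_mul] at hn
        exact (one_div_ne_zero hL₂.ne') hn.symm
      rw [zsmul_eq_mul] at hm hn
      -- from hm : m * c = 1/L₁, hn : n * c = 1/L₂
      have : (n : ℝ) * ((m : ℝ) * c) * Real.log q₂ * Real.log q₁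
          = (m : ℝ) * ((n : ℝ) * c) * Real.log q₁ * Real.log q₂ := by ring
      rw [hm, hn] at this
      field_simp at this
      linarith [this]
    -- exponentiate: q₂ ^ n = q₁ ^ m as reals with zpow
    have hpow : (q₂ : ℝ) ^ n = (q₁ : ℝ) ^ m := by
      have hlog : Real.log ((q₂ : ℝ) ^ n) = Real.log ((q₁ : ℝ) ^ m) := by
        rw [Real.log_zpow, Real.log_zpow, key]
      have h2pos : (0 : ℝ) < (q₂ : ℝ) ^ n := zpow_pos (by linarith) _
      have h1pos : (0 : ℝ) < (q₁ : ℝ) ^ m := zpow_pos (by linarith) _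
      exact Real.log_injOn_pos (Set.mem_Ioi.mpr h2pos) (Set.mem_Ioi.mpr h1pos) hlog
    -- signs: n ≠ 0
    have hnne : n ≠ 0 := by
      intro h0
      rw [zsmul_eq_mul, h0] at hn
      push_cast at hn
      rw [zero_mul] at hn
      exact (one_div_ne_zero hL₂.ne') hn.symm
    -- WLOG n > 0 by replacing (m, n) with (-m, -n)
    obtain ⟨m', n', hn'pos, hpow'⟩ :
        ∃ m' n' : ℤ, 0 < n' ∧ (q₂ : ℝ) ^ n' = (q₁ : ℝ) ^ m' := by
      rcases lt_or_gt_of_ne hnne with hneg | hpos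
      · exact ⟨-m, -n, by omega, by rw [zpow_neg, zpow_neg, hpow]⟩
      · exact ⟨m, n, hpos, hpow⟩
    -- then m' > 0
    have hm'pos : 0 < m' := by
      by_contra hm'
      push_neg at hm'
      have hlhs : (1 : ℝ) < (q₂ : ℝ) ^ n' := one_lt_zpow₀ hq₂1 hn'pos
      have hrhs : (q₁ : ℝ) ^ m' ≤ 1 :=
        zpow_le_one_of_nonpos₀ (le_of_lt hq₁1) hm'
      rw [hpow'] at hlhs
      linarith
    -- convert to ℕ
    have hnat : q₂ ^ n'.toNat = q₁ ^ m'.toNat := by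
      have : ((q₂ ^ n'.toNat : ℕ) : ℝ) = ((q₁ ^ m'.toNat : ℕ) : ℝ) := by
        push_cast
        rw [← zpow_natCast, ← zpow_natCast, Int.toNat_of_nonneg hn'pos.le,
          Int.toNat_of_nonneg hm'pos.le, hpow']
      exact_mod_cast this
    -- p₂ divides both sides, hence p₂ = p₁
    have hdvd : p₂ ∣ q₁ ^ m'.toNat := by
      rw [← hnat, hq₂]
      exact dvd_pow (dvd_pow_self p₂ hr₂.ne') (by omega)
    rw [hq₁, ← pow_mul] at hdvd
    exact hne ((Nat.prime_dvd_prime_iff_eq hp₂ hp₁).mp (hp₂.dvd_of_dvd_pow hdvd)).symm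

theorem dense_poles_in_vertical_line (p₁ p₂ : ℕ) (hp₁ : p₁.Prime) (hp₂ : p₂.Prime)
    (hne : p₁ ≠ p₂) (r₁ r₂ : ℕ) (hr₁ : 0 < r₁) (hr₂ : 0 < r₂)
    (q₁ q₂ : ℕ) (hq₁ : q₁ = p₁ ^ r₁) (hq₂ : q₂ = p₂ ^ r₂) :
    {s : ℂ | s.re = 2} ⊆
      closure {s : ℂ | ∃ b₁ b₂ : ℤ,
        s = 2 + 2 * Real.pi * Complex.I *
          ((b₁ : ℂ) / (Real.log q₁) + (b₂ : ℂ) / (Real.log q₂))} := by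
  intro s hs
  set S : AddSubgroup ℝ := AddSubgroup.closure {1 / Real.log q₁, 1 / Real.log q₂} with hS
  have hdense : Dense (S : Set ℝ) :=
    aux_dense_subgroup p₁ p₂ hp₁ hp₂ hne r₁ r₂ hr₁ hr₂ q₁ q₂ hq₁ hq₂
  set f : ℝ → ℂ := fun t => (2 : ℂ) + 2 * Real.pi * Complex.I * t with hf
  have hcont : Continuous f := by fun_prop
  set K : Set ℂ := {s : ℂ | ∃ b₁ b₂ : ℤ,
      s = 2 + 2 * Real.pi * Complex.I *
        ((b₁ : ℂ) / (Real.log q₁) + (b₂ : ℂ) / (Real.log q₂))} with hK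
  have himg : f '' (S : Set ℝ) ⊆ K := by
    rintro _ ⟨x, hx, rfl⟩
    rw [hS, SetLike.mem_coe, AddSubgroup.mem_closure_pair] at hx
    obtain ⟨b₁, b₂, hx⟩ := hx
    refine ⟨b₁, b₂, ?_⟩
    rw [hf]
    simp only
    congr 1
    rw [← hx, zsmul_eq_mul, zsmul_eq_mul]
    push_cast
    ring
  have hpi : (2 : ℝ) * Real.pi ≠ 0 := by positivity
  have hs2 : s.re = 2 := hs
  have hst : s = f (s.im / (2 * Real.pi)) := by
    rw [hf]
    simp only
    have hpic : (Real.pi : ℂ) ≠ 0 := by exact_mod_cast Real.pi_ne_zero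
    have h1 : (2 : ℂ) * Real.pi * I * ((s.im / (2 * Real.pi) : ℝ) : ℂ)
        = s.im * I := by
      push_cast
      field_simp
    rw [h1]
    conv_lhs => rw [← Complex.re_add_im s]
    rw [hs2]
    norm_num
  have hmem : s.im / (2 * Real.pi) ∈ closure (S : Set ℝ) := hdense _
  rw [hst]
  exact closure_mono himg
    (image_closure_subset_closure_image hcont (Set.mem_image_of_mem f hmem))
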